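/- Half-characteristic functional relation (c): for all complex u, v, θ[1,1;1,0](u,v) · θ[0,0;1,0](u,v) = i · ( Θ[1/2,1/2;0,0](2u,2v) − Θ[−1/2,−1/2;0,0](2u,2v) ) · Θ[1/2,1/2;0,0](0,0) + i · ( Θ[1/2,−1/2;0,0](2u,2v) − Θ[−1/2,1/2;0,0](2u,2v) ) · Θ[1/2,−1/2;0,0](0,0), where i = √−1. -/

import Mathlib

open Complex

/-- Genus-two theta function with real characteristics `a c b d`
(upper characteristics `a, c`, lower characteristics `b, d`),
moduli `τ₁ τ₂ τ₁₂` and complex arguments `x y`. -/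
noncomputable def theta (τ₁ τ₂ τ₁₂ : ℂ) (a c b d : ℝ) (x y : ℂ) : ℂ :=
  ∑' p : ℤ × ℤ,
    Complex.exp
      ((Real.pi : ℂ) * Complex.I *
          (τ₁ * ((p.1 : ℂ) + (a : ℂ) / 2) ^ 2 + τ₂ * ((p.2 : ℂ) + (c : ℂ) / 2) ^ 2 +
            2 * τ₁₂ * ((p.1 : ℂ) + (a : ℂ) / 2) * ((p.2 : ℂ) + (c : ℂ) / 2)) +
        2 * (Real.pi : ℂ) * Complex.I *
          (((p.1 : ℂ) + (a : ℂ) / 2) * (x + (b : ℂ) / 2) +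
            ((p.2 : ℂ) + (c : ℂ) / 2) * (y + (d : ℂ) / 2)))

/-- The same theta function with doubled moduli `2τ₁, 2τ₂, 2τ₁₂`. -/
noncomputable def Theta2 (τ₁ τ₂ τ₁₂ : ℂ) (a c b d : ℝ) (x y : ℂ) : ℂ :=
  theta (2 * τ₁) (2 * τ₂) (2 * τ₁₂) a c b d x y

/-! Let `Q(X) = τ₁X₁² + 2τ₁₂X₁X₂ + τ₂X₂²` and index the two factors by `X = m + (1/2, 1/2)` and
`X' = m'` with `m, m' ∈ ℤ²`. The parallelogram law `Q(X) + Q(X') = 2Q((X + X')/2) + 2Q((X - X')/2)`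
turns each product of summands into a product of summands with doubled moduli at `(X ± X')/2`.
In each coordinate a pair of integers is uniquely `(k + k' - ε, k - k')` with `ε ∈ {0, 1}`, and then
`(X + X')/2 = k + (1/2 - ε)/2` and `(X - X')/2 = k' + (1/2 - ε)/2`. Sorting by the two parities `ε`,
the double sum splits into four products of `Θ`'s with characteristics `±1/2`; the lower
characteristic `1` contributes the phase `exp(2πi (k₁ + (1/2 - ε₁)/2)) = i (-1)^ε₁`, and the
evenness `Θ[-a,-c](0,0) = Θ[a,c](0,0)` pairs the four terms into two. -/

noncomputable def thetaTerm (τ₁ τ₂ τ₁₂ X Y x y : ℂ) : ℂ :=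
  cexp ((Real.pi : ℂ) * I * (τ₁ * X ^ 2 + τ₂ * Y ^ 2 + 2 * τ₁₂ * X * Y) +
    2 * (Real.pi : ℂ) * I * (X * x + Y * y))

noncomputable def thetaSummand (τ₁ τ₂ τ₁₂ : ℂ) (a c b d : ℝ) (x y : ℂ) (p : ℤ × ℤ) : ℂ :=
  thetaTerm τ₁ τ₂ τ₁₂ (p.1 + a / 2) (p.2 + c / 2) (x + b / 2) (y + d / 2)

section Algebra

variable (τ₁ τ₂ τ₁₂ : ℂ)

lemma theta_eq_tsum (a c b d : ℝ) (x y : ℂ) :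
    theta τ₁ τ₂ τ₁₂ a c b d x y = ∑' p, thetaSummand τ₁ τ₂ τ₁₂ a c b d x y p :=
  rfl

lemma thetaTerm_mul_thetaTerm (X Y X' Y' x y : ℂ) :
    thetaTerm τ₁ τ₂ τ₁₂ X Y x y * thetaTerm τ₁ τ₂ τ₁₂ X' Y' x y =
      thetaTerm (2 * τ₁) (2 * τ₂) (2 * τ₁₂) ((X + X') / 2) ((Y + Y') / 2) (2 * x) (2 * y) *
        thetaTerm (2 * τ₁) (2 * τ₂) (2 * τ₁₂) ((X - X') / 2) ((Y - Y') / 2) 0 0 := by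
  simp only [thetaTerm, ← Complex.exp_add]
  ring_nf

lemma thetaTerm_add_args (X Y x y s t : ℂ) :
    thetaTerm τ₁ τ₂ τ₁₂ X Y (x + s) (y + t) =
      thetaTerm τ₁ τ₂ τ₁₂ X Y x y * cexp (2 * Real.pi * I * (X * s + Y * t)) := by
  simp only [thetaTerm, ← Complex.exp_add]
  ring_nf

lemma thetaTerm_neg (X Y x y : ℂ) :
    thetaTerm τ₁ τ₂ τ₁₂ (-X) (-Y) x y = thetaTerm τ₁ τ₂ τ₁₂ X Y (-x) (-y) := by
  simp only [thetaTerm]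
  ring_nf

lemma theta_neg (a c b d : ℝ) (x y : ℂ) :
    theta τ₁ τ₂ τ₁₂ (-a) (-c) (-b) (-d) (-x) (-y) = theta τ₁ τ₂ τ₁₂ a c b d x y := by
  rw [theta_eq_tsum, theta_eq_tsum, ← (Equiv.neg (ℤ × ℤ)).tsum_eq]
  refine tsum_congr fun p => ?_
  have h := thetaTerm_neg τ₁ τ₂ τ₁₂ (p.1 + a / 2) (p.2 + c / 2) (-(x + b / 2)) (-(y + d / 2))
  rw [neg_neg, neg_neg] at h
  rw [thetaSummand, thetaSummand, ← h, Equiv.neg_apply, Prod.fst_neg, Prod.snd_neg]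
  congr 1 <;> push_cast <;> ring

lemma Theta2_neg_char_zero (a c : ℝ) :
    Theta2 τ₁ τ₂ τ₁₂ (-a) (-c) 0 0 0 0 = Theta2 τ₁ τ₂ τ₁₂ a c 0 0 0 0 := by
  simpa [Theta2] using theta_neg (2 * τ₁) (2 * τ₂) (2 * τ₁₂) a c 0 0 0 0

end Algebra

noncomputable def halfChar (ε : Bool) : ℝ := 1 / 2 - ε.toNat

@[simp] lemma halfChar_false : halfChar false = 1 / 2 := by norm_num [halfChar]

@[simp] lemma halfChar_true : halfChar true = -(1 / 2) := by norm_num [halfChar]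

lemma cexp_two_pi_I_mul_add_halfChar (k : ℤ) (ε : Bool) :
    cexp (2 * Real.pi * I * (k + halfChar ε / 2)) = I * (-1) ^ ε.toNat := by
  rw [show 2 * Real.pi * I * (k + (halfChar ε : ℂ) / 2) =
      k * (2 * Real.pi * I) + Real.pi / 2 * I + ε.toNat * (-(Real.pi * I)) by
    push_cast [halfChar]; ring]
  rw [Complex.exp_add, Complex.exp_add, Complex.exp_int_mul_two_pi_mul_I,
    Complex.exp_pi_div_two_mul_I, Complex.exp_nat_mul, Complex.exp_neg_pi_mul_I, one_mul]

noncomputable def sumDiffEquiv : Bool × ℤ × ℤ ≃ ℤ × ℤ :=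
  Equiv.ofBijective (fun w => (w.2.1 + w.2.2 - w.1.toNat, w.2.1 - w.2.2)) <| by
    refine ⟨?_, ?_⟩
    · rintro ⟨_ | _, k, k'⟩ ⟨_ | _, l, l'⟩ h <;>
        simp only [Prod.mk.injEq, Bool.toNat_false, Bool.toNat_true, Nat.cast_zero,
          Nat.cast_one, Bool.false_eq_true, Bool.true_eq_false, false_and, true_and] at h ⊢ <;>
        omega
    · rintro ⟨m, m'⟩
      obtain ⟨j, hj | hj⟩ := Int.even_or_odd' (m + m')
      · exact ⟨(false, j, m - j), by simp only [Prod.mk.injEq, Bool.toNat_false]; omega⟩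
      · exact ⟨(true, j + 1, m - j), by simp only [Prod.mk.injEq, Bool.toNat_true]; omega⟩

noncomputable def sumDiffEquiv₂ : (Bool × Bool) × (ℤ × ℤ) × (ℤ × ℤ) ≃ (ℤ × ℤ) × (ℤ × ℤ) :=
  ((Equiv.refl _).prodCongr (Equiv.prodProdProdComm ℤ ℤ ℤ ℤ)).trans <|
    (Equiv.prodProdProdComm Bool Bool (ℤ × ℤ) (ℤ × ℤ)).trans <|
      (sumDiffEquiv.prodCongr sumDiffEquiv).trans (Equiv.prodProdProdComm ℤ ℤ ℤ ℤ)

lemma sumDiffEquiv₂_apply (ε₁ ε₂ : Bool) (k₁ k₂ k₁' k₂' : ℤ) :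
    sumDiffEquiv₂ ((ε₁, ε₂), (k₁, k₂), (k₁', k₂')) =
      ((k₁ + k₁' - ε₁.toNat, k₂ + k₂' - ε₂.toNat), (k₁ - k₁', k₂ - k₂')) :=
  rfl

lemma thetaSummand_mul_thetaSummand_sumDiffEquiv₂ (τ₁ τ₂ τ₁₂ u v : ℂ) (ε : Bool × Bool)
    (k : (ℤ × ℤ) × (ℤ × ℤ)) :
    thetaSummand τ₁ τ₂ τ₁₂ 1 1 1 0 u v (sumDiffEquiv₂ (ε, k)).1 *
        thetaSummand τ₁ τ₂ τ₁₂ 0 0 1 0 u v (sumDiffEquiv₂ (ε, k)).2 =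
      I * (-1) ^ ε.1.toNat *
        (thetaSummand (2 * τ₁) (2 * τ₂) (2 * τ₁₂) (halfChar ε.1) (halfChar ε.2) 0 0
            (2 * u) (2 * v) k.1 *
          thetaSummand (2 * τ₁) (2 * τ₂) (2 * τ₁₂) (halfChar ε.1) (halfChar ε.2) 0 0 0 0
            k.2) := by
  obtain ⟨ε₁, ε₂⟩ := ε
  obtain ⟨⟨k₁, k₂⟩, k₁', k₂'⟩ := k
  calc _ = thetaTerm (2 * τ₁) (2 * τ₂) (2 * τ₁₂) (k₁ + halfChar ε₁ / 2)
          (k₂ + halfChar ε₂ / 2) (2 * u + 1) (2 * v + 0) *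
        thetaTerm (2 * τ₁) (2 * τ₂) (2 * τ₁₂) (k₁' + halfChar ε₁ / 2)
          (k₂' + halfChar ε₂ / 2) 0 0 := by
        rw [sumDiffEquiv₂_apply, thetaSummand, thetaSummand, thetaTerm_mul_thetaTerm]
        congr 1 <;> congr 1 <;> push_cast [halfChar] <;> ring
    _ = _ := by
        rw [thetaTerm_add_args, thetaSummand, thetaSummand]
        simp only [mul_one, mul_zero, add_zero, Complex.ofReal_zero, zero_div]
        rw [cexp_two_pi_I_mul_add_halfChar]
        ring

section Summability

open Real

lemma norm_thetaTerm_ofReal (τ₁ τ₂ τ₁₂ : ℂ) (X Y : ℝ) (x y : ℂ) :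
    ‖thetaTerm τ₁ τ₂ τ₁₂ X Y x y‖ =
      rexp (-π * (τ₁.im * X ^ 2 + τ₂.im * Y ^ 2 + 2 * τ₁₂.im * X * Y) -
        2 * π * (X * x.im + Y * y.im)) := by
  rw [thetaTerm, Complex.norm_exp]
  congr 1
  simp [Complex.add_re, Complex.mul_re, Complex.mul_im, pow_two]
  ring

/-- `det / trace` is a lower bound for the smaller eigenvalue of `!![α, γ; γ, β]`. -/
lemma det_div_trace_mul_sq_add_sq_le {α β γ : ℝ} (hα : 0 < α) (hβ : 0 < β) (X Y : ℝ) :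
    (α * β - γ ^ 2) / (α + β) * (X ^ 2 + Y ^ 2) ≤ α * X ^ 2 + β * Y ^ 2 + 2 * γ * X * Y := by
  set δ := (α * β - γ ^ 2) / (α + β) with hδ_def
  have hδ_trace : δ * (α + β) = α * β - γ ^ 2 := by rw [hδ_def]; field_simp
  have hδ_lt : δ < α := by
    rw [hδ_def, div_lt_iff₀ (by positivity)]
    nlinarith
  have hdet : (α - δ) * (β - δ) - γ ^ 2 = δ ^ 2 := by nlinarith
  nlinarith [sq_nonneg ((α - δ) * X + γ * Y), sq_nonneg (δ * Y)]

lemma summable_exp_neg_mul_add_sq {δ : ℝ} (hδ : 0 < δ) (h t : ℝ) :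
    Summable fun n : ℤ => rexp (-π * δ * (n + h) ^ 2 - 2 * π * (n + h) * t) := by
  have hθ := ((summable_jacobiTheta₂_term_iff ((δ * h + t) * I) (δ * I)).mpr
    (by simpa using hδ)).norm.mul_right (rexp (-π * δ * h ^ 2 - 2 * π * h * t))
  refine hθ.congr fun n => ?_
  rw [norm_jacobiTheta₂_term, ← Real.exp_add]
  simp only [Complex.mul_I_im, Complex.add_re, Complex.ofReal_re, ← Complex.ofReal_mul]
  ring_nf

lemma summable_norm_thetaSummand {τ₁ τ₂ τ₁₂ : ℂ} (hτ₁ : 0 < τ₁.im) (hτ₂ : 0 < τ₂.im)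
    (hτ : τ₁₂.im ^ 2 < τ₁.im * τ₂.im) (a c b d : ℝ) (x y : ℂ) :
    Summable fun p => ‖thetaSummand τ₁ τ₂ τ₁₂ a c b d x y p‖ := by
  set δ := (τ₁.im * τ₂.im - τ₁₂.im ^ 2) / (τ₁.im + τ₂.im)
  have hδ : 0 < δ := div_pos (by linarith) (by linarith)
  have hbound := (summable_exp_neg_mul_add_sq hδ (a / 2) (x + b / 2).im).mul_of_nonneg
    (summable_exp_neg_mul_add_sq hδ (c / 2) (y + d / 2).im)
    (fun _ => (Real.exp_pos _).le) (fun _ => (Real.exp_pos _).le)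
  refine hbound.of_nonneg_of_le (fun _ => norm_nonneg _) fun p => ?_
  have hX : (p.1 : ℂ) + (a : ℂ) / 2 = ((p.1 + a / 2 : ℝ) : ℂ) := by push_cast; rfl
  have hY : (p.2 : ℂ) + (c : ℂ) / 2 = ((p.2 + c / 2 : ℝ) : ℂ) := by push_cast; rfl
  rw [thetaSummand, hX, hY, norm_thetaTerm_ofReal, ← Real.exp_add, Real.exp_le_exp]
  have hq := det_div_trace_mul_sq_add_sq_le (γ := τ₁₂.im) hτ₁ hτ₂ (p.1 + a / 2) (p.2 + c / 2)
  nlinarith [Real.pi_pos]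

end Summability

lemma tsum_thetaSummand_mul_thetaSummand_sumDiffEquiv₂ {τ₁ τ₂ τ₁₂ : ℂ} (hτ₁ : 0 < τ₁.im)
    (hτ₂ : 0 < τ₂.im) (hτ : τ₁₂.im ^ 2 < τ₁.im * τ₂.im) (u v : ℂ) (ε : Bool × Bool) :
    ∑' k : (ℤ × ℤ) × (ℤ × ℤ), thetaSummand τ₁ τ₂ τ₁₂ 1 1 1 0 u v (sumDiffEquiv₂ (ε, k)).1 *
        thetaSummand τ₁ τ₂ τ₁₂ 0 0 1 0 u v (sumDiffEquiv₂ (ε, k)).2 =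
      I * (-1) ^ ε.1.toNat *
        (Theta2 τ₁ τ₂ τ₁₂ (halfChar ε.1) (halfChar ε.2) 0 0 (2 * u) (2 * v) *
          Theta2 τ₁ τ₂ τ₁₂ (halfChar ε.1) (halfChar ε.2) 0 0 0 0) := by
  have him (z : ℂ) : (2 * z).im = 2 * z.im := by simp
  have h2τ₁ : 0 < (2 * τ₁).im := by rw [him]; positivity
  have h2τ₂ : 0 < (2 * τ₂).im := by rw [him]; positivity
  have h2τ : (2 * τ₁₂).im ^ 2 < (2 * τ₁).im * (2 * τ₂).im := by simp only [him]; nlinarith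
  rw [tsum_congr (thetaSummand_mul_thetaSummand_sumDiffEquiv₂ τ₁ τ₂ τ₁₂ u v ε),
    tsum_mul_left, Theta2, Theta2, theta_eq_tsum, theta_eq_tsum,
    tsum_mul_tsum_of_summable_norm (summable_norm_thetaSummand h2τ₁ h2τ₂ h2τ ..)
      (summable_norm_thetaSummand h2τ₁ h2τ₂ h2τ ..)]

theorem half_characteristic_relation_c (τ₁ τ₂ τ₁₂ : ℂ)
    (hτ₁ : 0 < τ₁.im) (hτ₂ : 0 < τ₂.im) (hτ : τ₁₂.im ^ 2 < τ₁.im * τ₂.im)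
    (u v : ℂ) :
    theta τ₁ τ₂ τ₁₂ 1 1 1 0 u v * theta τ₁ τ₂ τ₁₂ 0 0 1 0 u v =
      Complex.I * (Theta2 τ₁ τ₂ τ₁₂ (1/2) (1/2) 0 0 (2 * u) (2 * v) -
          Theta2 τ₁ τ₂ τ₁₂ (-(1/2)) (-(1/2)) 0 0 (2 * u) (2 * v)) *
        Theta2 τ₁ τ₂ τ₁₂ (1/2) (1/2) 0 0 0 0 +
      Complex.I * (Theta2 τ₁ τ₂ τ₁₂ (1/2) (-(1/2)) 0 0 (2 * u) (2 * v) -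
          Theta2 τ₁ τ₂ τ₁₂ (-(1/2)) (1/2) 0 0 (2 * u) (2 * v)) *
        Theta2 τ₁ τ₂ τ₁₂ (1/2) (-(1/2)) 0 0 0 0 := by
  have hf := summable_norm_thetaSummand hτ₁ hτ₂ hτ 1 1 1 0 u v
  have hg := summable_norm_thetaSummand hτ₁ hτ₂ hτ 0 0 1 0 u v
  have hfg := sumDiffEquiv₂.summable_iff.mpr (summable_mul_of_summable_norm hf hg)
  have hΘ₁ := Theta2_neg_char_zero τ₁ τ₂ τ₁₂ (1 / 2) (1 / 2)
  have hΘ₂ := Theta2_neg_char_zero τ₁ τ₂ τ₁₂ (1 / 2) (-(1 / 2))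
  rw [neg_neg] at hΘ₂
  calc theta τ₁ τ₂ τ₁₂ 1 1 1 0 u v * theta τ₁ τ₂ τ₁₂ 0 0 1 0 u v
      = ∑' z : (ℤ × ℤ) × (ℤ × ℤ),
          thetaSummand τ₁ τ₂ τ₁₂ 1 1 1 0 u v z.1 * thetaSummand τ₁ τ₂ τ₁₂ 0 0 1 0 u v z.2 := by
        rw [theta_eq_tsum, theta_eq_tsum, tsum_mul_tsum_of_summable_norm hf hg]
    _ = ∑ ε, ∑' k, thetaSummand τ₁ τ₂ τ₁₂ 1 1 1 0 u v (sumDiffEquiv₂ (ε, k)).1 *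
          thetaSummand τ₁ τ₂ τ₁₂ 0 0 1 0 u v (sumDiffEquiv₂ (ε, k)).2 := by
        rw [← sumDiffEquiv₂.tsum_eq, ← tsum_fintype (L := .unconditional _)]
        exact hfg.tsum_prod
    _ = _ := by
        simp only [tsum_thetaSummand_mul_thetaSummand_sumDiffEquiv₂ hτ₁ hτ₂ hτ,
          Fintype.sum_prod_type, Fintype.sum_bool, halfChar_true, halfChar_false,
          Bool.toNat_true, Bool.toNat_false, pow_zero, pow_one, hΘ₁, hΘ₂]
        ring
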